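/- arXiv:2412.18062 — 7 statements merged into one kernel-verified Lean document; each statement's English description precedes it below -/
import Mathlib

section
/- Let K be a differential field of characteristic 0 and let y be an element of a differential field extension of K with y' = a for some a ∈ K (i.e., y is an integral over K). Then y either belongs to K or is transcendental over K. -/
open Polynomial
open scoped Differential

/-- An integral over `K` either belongs to `K` or is transcendental over `K`. -/
theorem integral_mem_or_transcendental
    {K F : Type*} [Field K] [Field F] [CharZero K] [Algebra K F]
    (dK : K → K) (dF : F → F)
    (hKadd : ∀ a b, dK (a + b) = dK a + dK b)
    (hKmul : ∀ a b, dK (a * b) = dK a * b + a * dK b)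
    (hFadd : ∀ a b, dF (a + b) = dF a + dF b)
    (hFmul : ∀ a b, dF (a * b) = dF a * b + a * dF b)
    (hcompat : ∀ a : K, dF (algebraMap K F a) = algebraMap K F (dK a))
    (hconst : ∀ x : F, dF x = 0 → x ∈ (algebraMap K F).range)
    (y : F) (a : K) (hy : dF y = algebraMap K F a) :
    y ∈ (algebraMap K F).range ∨ Transcendental K y := by
  letI : Differential K :=
    ⟨Derivation.mk' (AddMonoidHom.mk' dK hKadd).toIntLinearMap
      (fun x z => by simp [hKmul x z, smul_eq_mul]; ring)⟩
  letI : Differential F :=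
    ⟨Derivation.mk' (AddMonoidHom.mk' dF hFadd).toIntLinearMap
      (fun x z => by simp [hFmul x z, smul_eq_mul]; ring)⟩
  haveI : DifferentialAlgebra K F := ⟨hcompat⟩
  by_cases hT : Transcendental K y
  · exact Or.inr hT
  left
  have halg : IsAlgebraic K y := not_not.mp hT
  have hint : IsIntegral K y := halg.isIntegral
  set p : K[X] := minpoly K y with hp
  have hmonic : p.Monic := minpoly.monic hint
  set n := p.natDegree with hn
  have hn1 : 1 ≤ n := minpoly.natDegree_pos hint
  set q : K[X] := Differential.mapCoeffs p + derivative p * C a with hq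
  have haq : aeval y q = 0 := by
    have := Differential.deriv_aeval_eq y p
    rw [minpoly.aeval, map_zero] at this
    have hy' : y′ = algebraMap K F a := hy
    rw [hy'] at this
    simp only [hq, map_add, map_mul, aeval_C]
    exact this.symm
  -- q has degree < degree p
  have hdeg : q.degree < p.degree := by
    have hpd : p.degree = (n : ℕ) := degree_eq_natDegree hmonic.ne_zero
    rw [hpd, degree_lt_iff_coeff_zero]
    intro m hm
    have hm' : n ≤ m := by exact_mod_cast hm
    have h1 : (Differential.mapCoeffs p).coeff m = 0 := by
      rcases eq_or_lt_of_le hm' with h | h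
      · have h1 : p.coeff m = 1 := by rw [← h]; exact hmonic.coeff_natDegree
        rw [Differential.coeff_mapCoeffs, h1]
        exact Derivation.map_one_eq_zero _
      · rw [Differential.coeff_mapCoeffs, coeff_eq_zero_of_natDegree_lt h, map_zero]
    have h2 : (derivative p).coeff m = 0 := by
      rw [coeff_derivative, coeff_eq_zero_of_natDegree_lt (by omega), zero_mul]
    simp [hq, coeff_mul_C, h1, h2]
  have hq0 : q = 0 := by
    by_contra h0
    exact absurd (minpoly.degree_le_of_ne_zero K y h0 haq) (not_le_of_gt hdeg)
  -- extract the coefficient at n - 1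
  have hc : dK (p.coeff (n - 1)) + (n : K) * a = 0 := by
    have := congrArg (fun r => r.coeff (n - 1)) hq0
    simp only [hq, coeff_add, coeff_mul_C, coeff_zero, Differential.coeff_mapCoeffs,
      coeff_derivative] at this
    have hco1 : p.coeff (n - 1 + 1) = 1 := by
      rw [show n - 1 + 1 = n by omega]; exact hmonic.coeff_natDegree
    rw [hco1] at this
    have hcast : ((n - 1 : ℕ) : K) + 1 = (n : K) := by
      rw [Nat.cast_sub hn1]; push_cast; ring
    have h' : dK (p.coeff (n - 1)) + 1 * (((n - 1 : ℕ) : K) + 1) * a = 0 := this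
    rw [hcast] at h'
    linear_combination h'
  -- now n • y + algebraMap (p.coeff (n-1)) is a constant
  set c := p.coeff (n - 1) with hcdef
  have hd : dF ((n : F) * y + algebraMap K F c) = 0 := by
    have hnF : (n : F) = algebraMap K F (n : K) := by push_cast; ring
    have h1 : dF ((n : F) * y) = (n : F) * dF y := by
      rw [hnF, hFmul]
      rw [hcompat]
      have : dK ((n : K)) = 0 := by
        have : ((n : K))′ = 0 := by simp
        exact this
      rw [this, map_zero, zero_mul, zero_add]
    rw [hFadd, h1, hcompat, hy, hnF, ← map_mul, ← map_add]
    rw [show (n : K) * a + dK c = dK c + (n : K) * a by ring, hc, map_zero]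
  obtain ⟨b, hb⟩ := hconst _ hd
  have hnK : (n : K) ≠ 0 := Nat.cast_ne_zero.mpr (by omega)
  have hnF' : (n : F) ≠ 0 := by
    rw [← map_natCast (algebraMap K F)]
    exact (_root_.map_ne_zero _).mpr (Nat.cast_ne_zero.mpr (by omega))
  refine ⟨(b - c) / (n : K), ?_⟩
  rw [map_div₀, map_sub, hb, map_natCast, add_sub_cancel_right,
    mul_div_cancel_left₀ y hnF']
end

section
/- Let K ⊆ F be differential fields and y ∈ F transcendental over K satisfying y' = 𝓡(y) for a rational function 𝓡 with coefficients in K. Then the differential field K⟨y⟩ generated by y over K is isomorphic, as a differential field over K, to the field K(t) of rational functions with the unique derivation extending that of K and satisfying t' = 𝓡(t). -/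
/-!
Since `y` is transcendental, evaluation at `y` extends from `K[t]` to a field embedding
`φ : K(t) → F` onto `K(y)`. Because `D` and `dF` are derivations, the elements `R` with
`dF (φ R) = φ (D R)` form a subfield of `K(t)`; it contains `K` (as `dF` extends `dK`) and `t` (as `y' = 𝓡(y)`),
so it is all of `K(t)`. Hence the image of `φ` is closed under `dF`, and it lies in every
subfield of `F` containing `K` and `y`, which makes it `K⟨y⟩`.
-/

open Polynomial
open scoped IntermediateField

def Derivation.ofLeibniz {A : Type*} [CommRing A] (d : A → A)
    (hadd : ∀ a b, d (a + b) = d a + d b) (hmul : ∀ a b, d (a * b) = d a * b + a * d b) :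
    Derivation ℤ A A :=
  Derivation.mk' (AddMonoidHom.mk' d hadd).toIntLinearMap fun a b => by
    simp [hmul, add_comm, mul_comm]

@[simp]
theorem Derivation.ofLeibniz_apply {A : Type*} [CommRing A] (d : A → A)
    (hadd : ∀ a b, d (a + b) = d a + d b) (hmul : ∀ a b, d (a * b) = d a * b + a * d b) (a : A) :
    Derivation.ofLeibniz d hadd hmul a = d a :=
  rfl

namespace RingHom

variable {A B : Type*} [Field A] [Field B]

def derivationEqLocus (φ : A →+* B) (dA : Derivation ℤ A A) (dB : Derivation ℤ B B) :
    Subfield A where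
  carrier := {a | dB (φ a) = φ (dA a)}
  zero_mem' := by simp
  one_mem' := by simp
  add_mem' ha hb := by simp_all
  mul_mem' ha hb := by simp_all [Derivation.leibniz]
  neg_mem' ha := by simp_all
  inv_mem' a ha := by simp_all [Derivation.leibniz_inv]

theorem mem_derivationEqLocus {φ : A →+* B} {dA : Derivation ℤ A A} {dB : Derivation ℤ B B}
    {a : A} : a ∈ φ.derivationEqLocus dA dB ↔ dB (φ a) = φ (dA a) :=
  Iff.rfl

end RingHom

theorem RatFunc.subfield_eq_top {K : Type*} [Field K] {S : Subfield (RatFunc K)}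
    (hC : ∀ c, RatFunc.C c ∈ S) (hX : RatFunc.X ∈ S) : S = ⊤ := by
  let E : IntermediateField K (RatFunc K) := { S with algebraMap_mem' := hC }
  have hE : K⟮RatFunc.X⟯ ≤ E := IntermediateField.adjoin_simple_le_iff.mpr hX
  rw [RatFunc.adjoin_X] at hE
  exact eq_top_iff.mpr fun x _ => hE trivial

theorem liouville_principle_general
    {K F : Type*} [Field K] [Field F] [Algebra K F]
    (dK : K → K) (dF : F → F)
    (hFadd : ∀ a b, dF (a + b) = dF a + dF b)
    (hFmul : ∀ a b, dF (a * b) = dF a * b + a * dF b)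
    (hcompat : ∀ a : K, dF (algebraMap K F a) = algebraMap K F (dK a))
    (y : F) (hy : Transcendental K y)
    (𝓡 : RatFunc K)
    (hy' : dF y = Polynomial.aeval y 𝓡.num / Polynomial.aeval y 𝓡.denom)
    -- `D` is the (unique) derivation on `K(t)` extending `dK` with `D t = 𝓡(t)`
    (D : RatFunc K → RatFunc K)
    (hDadd : ∀ a b, D (a + b) = D a + D b)
    (hDmul : ∀ a b, D (a * b) = D a * b + a * D b)
    (hDC : ∀ c : K, D (RatFunc.C c) = RatFunc.C (dK c))
    (hDX : D RatFunc.X = 𝓡) :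
    ∃ φ : RatFunc K →+* F,
      (∀ c : K, φ (RatFunc.C c) = algebraMap K F c) ∧
      φ RatFunc.X = y ∧
      (∀ R : RatFunc K, dF (φ R) = φ (D R)) ∧
      -- the image of `φ` is exactly `K⟨y⟩`, the smallest differential subfield of `F`
      -- containing `K` and `y`
      (∀ x : F, x ∈ Set.range φ ↔
        ∀ S : Subfield F, (∀ z ∈ S, dF z ∈ S) →
          (∀ c : K, algebraMap K F c ∈ S) → y ∈ S → x ∈ S) := by
  let φ : RatFunc K →+* F :=
    (K⟮y⟯.val.comp (RatFunc.algEquivOfTranscendental y hy).toAlgHom).toRingHom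
  have hφ : ∀ R, φ R = aeval y R.num / aeval y R.denom :=
    RatFunc.algEquivOfTranscendental_apply y hy
  have hφC : ∀ c, φ (RatFunc.C c) = algebraMap K F c := fun c => by
    simp [φ, ← RatFunc.algebraMap_C]
  have hφX : φ RatFunc.X = y := RatFunc.algEquivOfTranscendental_X y hy
  have hφD : φ.derivationEqLocus (Derivation.ofLeibniz D hDadd hDmul)
      (Derivation.ofLeibniz dF hFadd hFmul) = ⊤ :=
    RatFunc.subfield_eq_top (fun c => by simp [RingHom.mem_derivationEqLocus, hφC, hcompat, hDC])
      (by simp [RingHom.mem_derivationEqLocus, hφX, hy', hDX, hφ])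
  have hdφ : ∀ R, dF (φ R) = φ (D R) := fun R =>
    RingHom.mem_derivationEqLocus.mp (hφD ▸ Subfield.mem_top R)
  refine ⟨φ, hφC, hφX, hdφ, fun x => ⟨?_, fun hx => hx φ.fieldRange ?_ ?_ ?_⟩⟩
  · rintro ⟨R, rfl⟩ S - hSC hSy
    have hS : S.comap φ = ⊤ := RatFunc.subfield_eq_top (by simpa [hφC]) (by simpa [hφX])
    exact Subfield.mem_comap.mp (hS ▸ Subfield.mem_top R)
  · rintro _ ⟨R, rfl⟩
    exact hdφ R ▸ φ.mem_fieldRange_self (D R)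
  · exact fun c => hφC c ▸ φ.mem_fieldRange_self _
  · exact hφX ▸ φ.mem_fieldRange_self _

/-- Liouville's Principle: if `y ∈ F` is transcendental over `K` and `y' = 𝓡(y)` for a rational
function `𝓡` over `K`, then the differential field `K⟨y⟩` generated by `y` over `K` is isomorphic
over `K` to the rational function field `K(t)` with the derivation extending that of `K` and
sending `t` to `𝓡(t)`. -/
theorem liouville_principle
    {K F : Type*} [Field K] [Field F] [CharZero K] [Algebra K F]
    (dK : K → K) (dF : F → F)
    (hKadd : ∀ a b, dK (a + b) = dK a + dK b)
    (hKmul : ∀ a b, dK (a * b) = dK a * b + a * dK b)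
    (hFadd : ∀ a b, dF (a + b) = dF a + dF b)
    (hFmul : ∀ a b, dF (a * b) = dF a * b + a * dF b)
    (hcompat : ∀ a : K, dF (algebraMap K F a) = algebraMap K F (dK a))
    (y : F) (hy : Transcendental K y)
    (𝓡 : RatFunc K)
    (hy' : dF y = Polynomial.aeval y 𝓡.num / Polynomial.aeval y 𝓡.denom)
    -- `D` is the (unique) derivation on `K(t)` extending `dK` with `D t = 𝓡(t)`
    (D : RatFunc K → RatFunc K)
    (hDadd : ∀ a b, D (a + b) = D a + D b)
    (hDmul : ∀ a b, D (a * b) = D a * b + a * D b)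
    (hDC : ∀ c : K, D (RatFunc.C c) = RatFunc.C (dK c))
    (hDX : D RatFunc.X = 𝓡) :
    ∃ φ : RatFunc K →+* F,
      (∀ c : K, φ (RatFunc.C c) = algebraMap K F c) ∧
      φ RatFunc.X = y ∧
      (∀ R : RatFunc K, dF (φ R) = φ (D R)) ∧
      -- the image of `φ` is exactly `K⟨y⟩`, the smallest differential subfield of `F`
      -- containing `K` and `y`
      (∀ x : F, x ∈ Set.range φ ↔
        ∀ S : Subfield F, (∀ z ∈ S, dF z ∈ S) →
          (∀ c : K, algebraMap K F c ∈ S) → y ∈ S → x ∈ S) :=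
  liouville_principle_general dK dF hFadd hFmul hcompat y hy 𝓡 hy' D hDadd hDmul hDC hDX
end

section
/- A nonzero element y of a differential field extension of K satisfies the linear differential equation y^{(n)} + a_1 y^{(n-1)} + … + a_n y = 0 (with a_i ∈ K) if and only if its logarithmic derivative u = y'/y satisfies the generalized Riccati equation D_n(u) + a_1 D_{n-1}(u) + … + a_n D_0(u) = 0. -/
/-!
If `y' = u y`, differentiating `y⁽ᵏ⁾ = D_k(u) y` gives `y⁽ᵏ⁺¹⁾ = (D_k(u)' + u D_k(u)) y = D_{k+1}(u) y`,
because evaluating a differential polynomial at `(u, u', u'', …)` turns `diffDer` into the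
derivation of `F`. Hence the linear expression in `y` is the Riccati expression in `u` times `y`,
and `y ≠ 0`.
-/

open MvPolynomial

/-- The derivation `δ` on differential polynomials in `u, u', u'', …`. -/
noncomputable def diffDer : Derivation ℤ (MvPolynomial ℕ ℤ) (MvPolynomial ℕ ℤ) :=
  MvPolynomial.mkDerivation ℤ (fun i => X (i + 1))

/-- The polynomials `D_n`: `D_0 = 1`, `D_{k+1} = (D_k)' + u·D_k`. -/
noncomputable def Dpoly : ℕ → MvPolynomial ℕ ℤ
  | 0 => 1
  | k + 1 => diffDer (Dpoly k) + X 0 * Dpoly k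

namespace Derivation

def ofLeibniz_s5 {A : Type*} [CommRing A] (d : A → A)
    (hadd : ∀ a b, d (a + b) = d a + d b) (hmul : ∀ a b, d (a * b) = d a * b + a * d b) :
    Derivation ℤ A A :=
  Derivation.mk' (AddMonoidHom.mk' d hadd).toIntLinearMap fun a b => by
    change d (a * b) = a * d b + b * d a
    rw [hmul]; ring

variable {A : Type*} [CommRing A] (D : Derivation ℤ A A)

theorem apply_aeval_iterate (u : A) (p : MvPolynomial ℕ ℤ) :
    D (aeval (fun j => D^[j] u) p) = aeval (fun j => D^[j] u) (diffDer p) := by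
  induction p using MvPolynomial.induction_on with
  | C m => simp [← MvPolynomial.algebraMap_eq]
  | add p q hp hq => simp only [map_add, hp, hq]
  | mul_X p i hp =>
    simp only [map_mul, leibniz, hp, aeval_X, diffDer, mkDerivation_X, smul_eq_mul,
      map_add, Function.iterate_succ_apply']

theorem iterate_eq_aeval_Dpoly_mul {u y : A} (hy : D y = u * y) (k : ℕ) :
    D^[k] y = aeval (fun j => D^[j] u) (Dpoly k) * y := by
  induction k with
  | zero => simp [Dpoly]
  | succ k ih =>
    rw [Function.iterate_succ_apply', ih, D.leibniz, D.apply_aeval_iterate, hy]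
    simp only [Dpoly, map_add, map_mul, aeval_X, Function.iterate_zero_apply, smul_eq_mul]
    ring

end Derivation

theorem linear_ode_iff_riccati_general
    {K F : Type*} [Field K] [Field F] [Algebra K F]
    (dF : F → F)
    (hadd : ∀ a b, dF (a + b) = dF a + dF b)
    (hmul : ∀ a b, dF (a * b) = dF a * b + a * dF b)
    (n : ℕ) (a : ℕ → K)
    (y : F) (hy : y ≠ 0) :
    (∑ i ∈ Finset.range (n + 1), algebraMap K F (a i) * dF^[n - i] y = 0) ↔
    (∑ i ∈ Finset.range (n + 1), algebraMap K F (a i) *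
        MvPolynomial.aeval (fun j => dF^[j] (dF y / y)) (Dpoly (n - i)) = 0) := by
  let D := Derivation.ofLeibniz_s5 dF hadd hmul
  have hlog : D y = dF y / y * y := (div_mul_cancel₀ _ hy).symm
  have hfactor : ∑ i ∈ Finset.range (n + 1), algebraMap K F (a i) * dF^[n - i] y =
      (∑ i ∈ Finset.range (n + 1), algebraMap K F (a i) *
        aeval (fun j => dF^[j] (dF y / y)) (Dpoly (n - i))) * y := by
    simp only [Finset.sum_mul, mul_assoc]
    exact Finset.sum_congr rfl fun i _ => congrArg _ (D.iterate_eq_aeval_Dpoly_mul hlog (n - i))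
  rw [hfactor, mul_eq_zero, or_iff_left hy]

/-- A nonzero `y` satisfies `y⁽ⁿ⁾ + a₁ y⁽ⁿ⁻¹⁾ + … + aₙ y = 0` (coefficients in `K`,
with the convention `a 0 = 1`) iff its logarithmic derivative `u = y'/y` satisfies the
generalized Riccati equation `Dₙ(u) + a₁ Dₙ₋₁(u) + … + aₙ D₀(u) = 0`. -/
theorem linear_ode_iff_riccati
    {K F : Type*} [Field K] [Field F] [CharZero K] [Algebra K F]
    (dF : F → F)
    (hadd : ∀ a b, dF (a + b) = dF a + dF b)
    (hmul : ∀ a b, dF (a * b) = dF a * b + a * dF b)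
    (n : ℕ) (a : ℕ → K) (ha0 : a 0 = 1)
    (y : F) (hy : y ≠ 0) :
    (∑ i ∈ Finset.range (n + 1), algebraMap K F (a i) * dF^[n - i] y = 0) ↔
    (∑ i ∈ Finset.range (n + 1), algebraMap K F (a i) *
        MvPolynomial.aeval (fun j => dF^[j] (dF y / y)) (Dpoly (n - i)) = 0) :=
  linear_ode_iff_riccati_general dF hadd hmul n a y hy
end

section
/- Every meromorphic function on the complex plane that is algebraic over the field ℂ(z) of rational functions is itself a rational function. Consequently, if all coefficients a_i of the equation y^{(n)} + a_1 y^{(n-1)} + … + a_n y = 0 are polynomials in ℂ[z], then the extension of ℂ(z) obtained by adjoining all (entire) solutions of the equation is pure transcendental. -/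
/-!
If `f` is meromorphic and `∑ cᵢ fⁱ = 0` with `c_N ≠ 0`, then `u = c_N f` satisfies a monic equation
`uᴺ + ∑ bᵢ uⁱ = 0` with polynomial coefficients. Cauchy's root bound `‖u‖ ≤ 1 + ∑ ‖bᵢ‖` shows that
`u` is bounded near every point and has polynomial growth, so its singularities are removable and
the resulting entire function is a polynomial by Liouville's theorem.

For the second part, the functions that agree with a meromorphic function off a countable set form
a ring that is closed under inversion and contains `ℂ(z)` and every entire function, hence every
solution of the equation. So a function in the field generated by the solutions agrees with a
meromorphic function off a countable set, and an algebraic relation for it passes to that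
meromorphic function by continuity, because countable sets have dense complement.
-/

open Finset Filter Topology Polynomial

theorem norm_le_one_add_sum_of_pow_add_sum_eq_zero {K : Type*} [NormedField K] {x : K} {N : ℕ}
    {b : ℕ → K} (h : x ^ N + ∑ i ∈ range N, b i * x ^ i = 0) :
    ‖x‖ ≤ 1 + ∑ i ∈ range N, ‖b i‖ := by
  have hS : 0 ≤ ∑ i ∈ range N, ‖b i‖ := sum_nonneg fun _ _ => norm_nonneg _
  rcases le_or_gt ‖x‖ 1 with hx | hx
  · linarith
  have hpow : ‖x‖ ^ N ≤ ∑ i ∈ range N, ‖b i‖ * ‖x‖ ^ i := by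
    rw [← norm_pow, eq_neg_of_add_eq_zero_left h, norm_neg]
    refine (norm_sum_le _ _).trans_eq ?_
    simp only [norm_mul, norm_pow]
  have hlow : ∀ i ∈ range N, ‖x‖ * ‖x‖ ^ i ≤ ‖x‖ ^ N := fun i hi => by
    rw [← pow_succ']
    exact pow_le_pow_right₀ hx.le (mem_range.1 hi)
  have : ‖x‖ * ‖x‖ ^ N ≤ (∑ i ∈ range N, ‖b i‖) * ‖x‖ ^ N :=
    calc ‖x‖ * ‖x‖ ^ N ≤ ‖x‖ * ∑ i ∈ range N, ‖b i‖ * ‖x‖ ^ i :=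
          mul_le_mul_of_nonneg_left hpow (by linarith)
      _ = ∑ i ∈ range N, ‖b i‖ * (‖x‖ * ‖x‖ ^ i) := by simp only [mul_sum, mul_left_comm]
      _ ≤ ∑ i ∈ range N, ‖b i‖ * ‖x‖ ^ N :=
          sum_le_sum fun i hi => mul_le_mul_of_nonneg_left (hlow i hi) (norm_nonneg _)
      _ = (∑ i ∈ range N, ‖b i‖) * ‖x‖ ^ N := (sum_mul ..).symm
  linarith [le_of_mul_le_mul_right this (pow_pos (by linarith) N)]

theorem pow_mul_sum_range_eq_pow_add_sum {R : Type*} [CommRing R] (c : ℕ → R) (x : R) (n : ℕ) :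
    c (n + 1) ^ n * ∑ i ∈ range (n + 2), c i * x ^ i =
      (c (n + 1) * x) ^ (n + 1) +
        ∑ i ∈ range (n + 1), c i * c (n + 1) ^ (n - i) * (c (n + 1) * x) ^ i := by
  rw [sum_range_succ _ (n + 1), mul_add, mul_sum, add_comm]
  congr 1
  · ring
  · refine sum_congr rfl fun i hi => ?_
    rw [← Nat.sub_add_cancel (Nat.lt_succ_iff.1 (mem_range.1 hi)), pow_add, Nat.add_sub_cancel]
    ring

theorem Polynomial.norm_eval_le_of_natDegree_le {K : Type*} [NormedField K] {p : K[X]} {d : ℕ}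
    (hp : p.natDegree ≤ d) (z : K) :
    ‖p.eval z‖ ≤ (∑ i ∈ range (d + 1), ‖p.coeff i‖) * (1 + ‖z‖) ^ d := by
  rw [eval_eq_sum_range' (Nat.lt_succ_of_le hp), sum_mul]
  refine (norm_sum_le _ _).trans (sum_le_sum fun i hi => ?_)
  rw [norm_mul, norm_pow]
  gcongr
  calc ‖z‖ ^ i ≤ (1 + ‖z‖) ^ i := by gcongr; linarith
    _ ≤ (1 + ‖z‖) ^ d := pow_le_pow_right₀ (by simp) (Nat.lt_succ_iff.1 (mem_range.1 hi))

theorem exists_one_add_sum_norm_eval_le {K : Type*} [NormedField K] (N : ℕ) (b : ℕ → K[X]) :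
    ∃ C : ℝ, ∃ d : ℕ, ∀ z, 1 + ∑ i ∈ range N, ‖(b i).eval z‖ ≤ C * (1 + ‖z‖) ^ d := by
  set d := (range N).sup fun i => (b i).natDegree
  refine ⟨1 + ∑ i ∈ range N, ∑ j ∈ range (d + 1), ‖(b i).coeff j‖, d, fun z => ?_⟩
  rw [add_mul, one_mul, sum_mul]
  gcongr with i hi
  · exact one_le_pow₀ (by linarith [norm_nonneg z])
  · exact (b i).norm_eval_le_of_natDegree_le (le_sup (f := fun i => (b i).natDegree) hi) z

theorem Polynomial.eq_zero_of_eventually_eval_eq_zero {K : Type*} [NontriviallyNormedField K]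
    {p : K[X]} {x : K} (h : ∀ᶠ z in 𝓝[≠] x, p.eval z = 0) : p = 0 := by
  by_contra hp
  refine (Set.Infinite.of_accPt (x := x) ?_) (p.finite_setOfPred_isRoot hp)
  have hroots : {z | p.IsRoot z} ∈ 𝓝[≠] x := h
  rw [AccPt, inf_of_le_left (le_principal_iff.2 hroots)]
  infer_instance

theorem Differentiable.dslope {E : Type*} [NormedAddCommGroup E] [NormedSpace ℂ E]
    [CompleteSpace E] {f : ℂ → E} (hf : Differentiable ℂ f) (c : ℂ) :
    Differentiable ℂ (dslope f c) :=
  differentiableOn_univ.1 ((Complex.differentiableOn_dslope univ_mem).2 hf.differentiableOn)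

theorem exists_norm_dslope_zero_le_of_norm_le {v : ℂ → ℂ} (hv : Differentiable ℂ v) {C : ℝ} {d : ℕ}
    (hb : ∀ z, ‖v z‖ ≤ C * (1 + ‖z‖) ^ (d + 1)) :
    ∃ C', ∀ z, ‖dslope v 0 z‖ ≤ C' * (1 + ‖z‖) ^ d := by
  obtain ⟨K, hK⟩ := (isCompact_closedBall (0 : ℂ) 1).exists_bound_of_continuousOn
    (hv.dslope 0).continuous.continuousOn
  have hC : 0 ≤ C := by simpa using (norm_nonneg _).trans (hb 0)
  have hK0 : 0 ≤ K := (norm_nonneg _).trans (hK 0 (by simp))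
  refine ⟨K + 3 * C, fun z => ?_⟩
  have hP : 1 ≤ (1 + ‖z‖) ^ d := one_le_pow₀ (by linarith [norm_nonneg z])
  -- Compactness bounds `dslope v 0` on the unit disc; outside it, `z • dslope v 0 z = v z - v 0`
  -- and `1 + ‖z‖ ≤ 2 ‖z‖`.
  rcases le_or_gt ‖z‖ 1 with hz | hz
  · calc ‖dslope v 0 z‖ ≤ K := hK z (by simpa using hz)
      _ ≤ (K + 3 * C) * (1 + ‖z‖) ^ d := by nlinarith
  · have hslope : ‖z‖ * ‖dslope v 0 z‖ = ‖v z - v 0‖ := by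
      simpa using congrArg norm (sub_smul_dslope v 0 z)
    refine le_of_mul_le_mul_left ?_ (by linarith : 0 < ‖z‖)
    calc ‖z‖ * ‖dslope v 0 z‖ ≤ ‖v z‖ + ‖v 0‖ := hslope ▸ norm_sub_le _ _
      _ ≤ C * (1 + ‖z‖) ^ (d + 1) + C := by simpa using add_le_add (hb z) (hb 0)
      _ ≤ ‖z‖ * ((K + 3 * C) * (1 + ‖z‖) ^ d) := by
        rw [pow_succ]
        nlinarith [mul_nonneg (mul_nonneg hC (by linarith : (0:ℝ) ≤ (1 + ‖z‖) ^ d))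
            (sub_nonneg.2 hz.le),
          mul_nonneg hK0 (by positivity : (0:ℝ) ≤ ‖z‖ * (1 + ‖z‖) ^ d),
          mul_nonneg hC (by nlinarith : (0:ℝ) ≤ ‖z‖ * (1 + ‖z‖) ^ d - 1)]

theorem Differentiable.exists_polynomial_eq_of_norm_le {v : ℂ → ℂ} (hv : Differentiable ℂ v)
    {C : ℝ} {d : ℕ} (hb : ∀ z, ‖v z‖ ≤ C * (1 + ‖z‖) ^ d) : ∃ p : ℂ[X], ∀ z, v z = p.eval z := by
  induction d generalizing v C with
  | zero =>
    obtain ⟨a, ha⟩ := hv.exists_eq_const_of_bounded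
      (isBounded_iff_forall_norm_le.2 ⟨C, by simpa using hb⟩)
    exact ⟨Polynomial.C a, fun z => by simp [ha]⟩
  | succ d ih =>
    obtain ⟨C', hC'⟩ := exists_norm_dslope_zero_le_of_norm_le hv hb
    obtain ⟨p, hp⟩ := ih (hv.dslope 0) hC'
    refine ⟨X * p + Polynomial.C (v 0), fun z => ?_⟩
    have := sub_smul_dslope v 0 z
    simp only [sub_zero, smul_eq_mul, hp] at this
    simp only [eval_add, eval_mul, eval_X, eval_C]
    linear_combination -this

theorem Differentiable.meromorphic {E : Type*} [NormedAddCommGroup E] [NormedSpace ℂ E]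
    [CompleteSpace E] {f : ℂ → E} (hf : Differentiable ℂ f) : Meromorphic f :=
  fun x => (hf.analyticAt x).meromorphicAt

theorem meromorphicOrderAt_nonneg_of_isBoundedUnder {𝕜 E : Type*} [NontriviallyNormedField 𝕜]
    [NormedAddCommGroup E] [NormedSpace 𝕜 E] {u : 𝕜 → E} {x : 𝕜}
    (hb : IsBoundedUnder (· ≤ ·) (𝓝[≠] x) (‖u ·‖)) : 0 ≤ meromorphicOrderAt u x := by
  by_contra! h
  exact not_isBoundedUnder_of_tendsto_atTop
    (tendsto_norm_atTop_iff_cobounded.2 (tendsto_cobounded_of_meromorphicOrderAt_neg h)) hb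

theorem Meromorphic.exists_analyticAt_eventuallyEq_of_norm_le {𝕜 E : Type*}
    [NontriviallyNormedField 𝕜] [NormedAddCommGroup E] [NormedSpace 𝕜 E] {u : 𝕜 → E}
    (hu : Meromorphic u) {M : 𝕜 → ℝ} (hM : Continuous M)
    (hb : ∀ x, ∀ᶠ z in 𝓝[≠] x, ‖u z‖ ≤ M z) :
    ∃ v : 𝕜 → E, (∀ x, AnalyticAt 𝕜 v x) ∧ (∀ x, ‖v x‖ ≤ M x) ∧ ∀ x, u =ᶠ[𝓝[≠] x] v := by
  set v := toMeromorphicNFOn u Set.univ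
  have huv (x : 𝕜) : u =ᶠ[𝓝[≠] x] v :=
    (hu.meromorphicOn.toMeromorphicNFOn_eq_self_on_nhdsNE (Set.mem_univ x)).symm
  have hv (x : 𝕜) : AnalyticAt 𝕜 v x := by
    rw [← (meromorphicNFOn_toMeromorphicNFOn u _
        (Set.mem_univ x)).meromorphicOrderAt_nonneg_iff_analyticAt,
      meromorphicOrderAt_toMeromorphicNFOn hu.meromorphicOn (Set.mem_univ x)]
    refine meromorphicOrderAt_nonneg_of_isBoundedUnder ⟨M x + 1, eventually_map.2 ?_⟩
    filter_upwards [hb x,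
      ((hM.tendsto x).eventually_le_const (lt_add_one _)).filter_mono nhdsWithin_le_nhds]
      with z hz hMz using hz.trans hMz
  refine ⟨v, hv, fun x => ?_, huv⟩
  refine le_of_tendsto_of_tendsto (b := 𝓝[≠] x)
    ((hv x).continuousAt.norm.tendsto.mono_left nhdsWithin_le_nhds)
    ((hM.tendsto x).mono_left nhdsWithin_le_nhds) ?_
  filter_upwards [hb x, huv x] with z hz hvz
  rwa [← hvz]

theorem Meromorphic.exists_polynomial_eventuallyEq_of_monic_relation {u : ℂ → ℂ}
    (hu : Meromorphic u) {N : ℕ} {b : ℕ → ℂ[X]}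
    (h : ∀ x, ∀ᶠ z in 𝓝[≠] x, u z ^ N + ∑ i ∈ range N, (b i).eval z * u z ^ i = 0) :
    ∃ p : ℂ[X], ∀ x, u =ᶠ[𝓝[≠] x] fun z => p.eval z := by
  obtain ⟨C, d, hCd⟩ := exists_one_add_sum_norm_eval_le N b
  obtain ⟨v, hv, hvM, huv⟩ := hu.exists_analyticAt_eventuallyEq_of_norm_le (by fun_prop)
    fun x => (h x).mono fun z hz =>
      norm_le_one_add_sum_of_pow_add_sum_eq_zero (b := fun i => (b i).eval z) hz
  obtain ⟨p, hp⟩ := Differentiable.exists_polynomial_eq_of_norm_le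
    (fun x => (hv x).differentiableAt) fun z => (hvM z).trans (hCd z)
  exact ⟨p, fun x => (huv x).trans (Eventually.of_forall hp)⟩

theorem Meromorphic.exists_polynomial_mul_eq_of_algebraic {f : ℂ → ℂ} (hf : Meromorphic f)
    {N : ℕ} {c : ℕ → ℂ[X]} (hc : c N ≠ 0)
    (h : ∀ z, AnalyticAt ℂ f z → ∑ i ∈ range (N + 1), (c i).eval z * f z ^ i = 0) :
    ∃ p : ℂ[X], ∀ z, AnalyticAt ℂ f z → (c N).eval z * f z = p.eval z := by
  have hrel (x : ℂ) : ∀ᶠ z in 𝓝[≠] x, ∑ i ∈ range (N + 1), (c i).eval z * f z ^ i = 0 :=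
    (hf x).eventually_analyticAt.mono h
  cases N with
  | zero =>
    refine absurd (eq_zero_of_eventually_eval_eq_zero ((hrel 0).mono fun z hz => ?_)) hc
    simpa using hz
  | succ n =>
    have hmonic (x : ℂ) : ∀ᶠ z in 𝓝[≠] x, ((c (n + 1)).eval z * f z) ^ (n + 1) +
        ∑ i ∈ range (n + 1), (c i * c (n + 1) ^ (n - i)).eval z *
          ((c (n + 1)).eval z * f z) ^ i = 0 :=
      (hrel x).mono fun z hz => by
        simp only [eval_mul, eval_pow]
        rw [← pow_mul_sum_range_eq_pow_add_sum (fun i => (c i).eval z), hz, mul_zero]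
    obtain ⟨p, hp⟩ := ((c (n + 1)).differentiable.meromorphic.fun_mul
      hf).exists_polynomial_eventuallyEq_of_monic_relation hmonic
    refine ⟨p, fun z hz => ?_⟩
    have hcont : ContinuousAt (fun z => (c (n + 1)).eval z * f z) z :=
      (c (n + 1)).continuous.continuousAt.mul hz.continuousAt
    exact ((hcont.eventuallyEq_nhds_iff_eventuallyEq_nhdsNE
      (g := fun z => p.eval z) p.continuous.continuousAt).1 (hp z)).eq_of_nhds

theorem Filter.eventually_cocountable_iff {α : Type*} {p : α → Prop} :
    (∀ᶠ x in cocountable, p x) ↔ ∃ E : Set α, E.Countable ∧ ∀ x ∉ E, p x :=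
  ⟨fun h => ⟨_, mem_cocountable.1 h, fun _ hx => not_not.1 hx⟩,
    fun ⟨E, hE, hp⟩ => mem_of_superset (mem_cocountable.2 (by rwa [compl_compl]) : Eᶜ ∈ _) hp⟩

theorem ContinuousAt.eq_of_eventuallyEq_cocountable {E Y : Type*} [NormedAddCommGroup E]
    [NormedSpace ℝ E] [Nontrivial E] [TopologicalSpace Y] [T2Space Y] {F G : E → Y} {z : E}
    (hF : ContinuousAt F z) (hG : ContinuousAt G z) (h : F =ᶠ[cocountable] G) : F z = G z := by
  have : (𝓝 z ⊓ cocountable).NeBot := by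
    refine inf_neBot_iff.2 fun s hs t ht => ?_
    obtain ⟨U, hUs, hU, hzU⟩ := mem_nhds_iff.1 hs
    obtain ⟨y, hyU, hyt⟩ :=
      ((mem_cocountable.1 ht).dense_compl ℝ).inter_open_nonempty U hU ⟨z, hzU⟩
    exact ⟨y, hUs hyU, not_not.1 hyt⟩
  exact tendsto_nhds_unique (hF.mono_left inf_le_left)
    ((hG.mono_left inf_le_left).congr' (h.filter_mono inf_le_right).symm)

variable (𝕜 : Type*) [NontriviallyNormedField 𝕜] in
def cocountablyMeromorphic : Subring (𝕜 → 𝕜) where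
  carrier := {h | ∃ m, Meromorphic m ∧ h =ᶠ[cocountable] m}
  one_mem' := ⟨1, Meromorphic.const 1, EventuallyEq.rfl⟩
  zero_mem' := ⟨0, Meromorphic.const 0, EventuallyEq.rfl⟩
  mul_mem' := fun ⟨m₁, hm₁, h₁⟩ ⟨m₂, hm₂, h₂⟩ => ⟨m₁ * m₂, hm₁.mul hm₂, h₁.mul h₂⟩
  add_mem' := fun ⟨m₁, hm₁, h₁⟩ ⟨m₂, hm₂, h₂⟩ => ⟨m₁ + m₂, hm₁.add hm₂, h₁.add h₂⟩
  neg_mem' := fun ⟨m, hm, h⟩ => ⟨-m, hm.neg, h.neg⟩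

section cocountablyMeromorphic

variable {𝕜 : Type*} [NontriviallyNormedField 𝕜]

theorem Meromorphic.mem_cocountablyMeromorphic {m : 𝕜 → 𝕜} (hm : Meromorphic m) :
    m ∈ cocountablyMeromorphic 𝕜 :=
  ⟨m, hm, EventuallyEq.rfl⟩

theorem inv_mem_cocountablyMeromorphic {h : 𝕜 → 𝕜} (hh : h ∈ cocountablyMeromorphic 𝕜) :
    h⁻¹ ∈ cocountablyMeromorphic 𝕜 :=
  let ⟨m, hm, hhm⟩ := hh
  ⟨m⁻¹, hm.inv, hhm.inv⟩

end cocountablyMeromorphic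

theorem exists_polynomial_div_eventuallyEq_of_algebraic {g : ℂ → ℂ}
    (hg : g ∈ cocountablyMeromorphic ℂ) {N : ℕ} {c : ℕ → ℂ[X]} (hc : c N ≠ 0)
    (h : ∀ᶠ z in cocountable, ∑ i ∈ range (N + 1), (c i).eval z * g z ^ i = 0) :
    ∃ p q : ℂ[X], q ≠ 0 ∧ ∀ᶠ z in cocountable, g z = p.eval z / q.eval z := by
  obtain ⟨m, hm, hgm⟩ := hg
  have hrel (z : ℂ) (hz : AnalyticAt ℂ m z) :
      ∑ i ∈ range (N + 1), (c i).eval z * m z ^ i = 0 := by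
    refine ContinuousAt.eq_of_eventuallyEq_cocountable
      (F := fun w => ∑ i ∈ range (N + 1), (c i).eval w * m w ^ i) (G := fun _ => 0) ?_
      continuousAt_const ?_
    · have := hz.continuousAt
      fun_prop
    · filter_upwards [h, hgm] with w hw hgw
      rwa [← hgw]
  obtain ⟨p, hp⟩ := hm.exists_polynomial_mul_eq_of_algebraic hc hrel
  have hroots : ∀ᶠ z in cocountable, (c N).eval z ≠ 0 :=
    mem_cocountable.2
      (((c N).finite_setOfPred_isRoot hc).countable.mono fun _ hz => not_not.1 hz)
  refine ⟨p, c N, hc, ?_⟩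
  filter_upwards [hgm, mem_cocountable.2 hm.countable_compl_analyticAt, hroots]
    with z hgz hmz hqz
  rw [hgz, eq_div_iff hqz, mul_comm, hp z hmz]

/-- (1) A meromorphic function on `ℂ` that is algebraic over `ℂ(z)` is a rational function.
(2) Consequently, for a linear ODE `y⁽ⁿ⁾ + a₁ y⁽ⁿ⁻¹⁾ + … + aₙ y = 0` with polynomial
coefficients, the extension of `ℂ(z)` obtained by adjoining all (entire) solutions is pure
transcendental: every element of the field generated by the rational functions and the
solutions that is algebraic over `ℂ(z)` is (away from a countable exceptional set where
the pointwise field operations misbehave) a rational function. -/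
theorem meromorphic_algebraic_is_rational_and_pure_transcendence :
    (∀ f : ℂ → ℂ, MeromorphicOn f Set.univ →
      ∀ (N : ℕ) (c : ℕ → Polynomial ℂ), c N ≠ 0 →
      (∀ z, AnalyticAt ℂ f z →
        ∑ i ∈ Finset.range (N + 1), (c i).eval z * f z ^ i = 0) →
      ∃ p q : Polynomial ℂ, q ≠ 0 ∧
        ∀ z, AnalyticAt ℂ f z → q.eval z ≠ 0 → f z = p.eval z / q.eval z)
    ∧
    (∀ (n : ℕ), 1 ≤ n → ∀ a : ℕ → Polynomial ℂ,
      ∀ g : ℂ → ℂ,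
      -- `g` lies in the field generated by `ℂ(z)` and all solutions of the ODE
      (∀ S : Subring (ℂ → ℂ),
        (∀ p q : Polynomial ℂ, q ≠ 0 → (fun z => p.eval z / q.eval z) ∈ S) →
        (∀ f : ℂ → ℂ, Differentiable ℂ f →
          (∀ z, iteratedDeriv n f z +
            ∑ i ∈ Finset.range n, (a (i + 1)).eval z * iteratedDeriv (n - 1 - i) f z = 0) →
          f ∈ S) →
        (∀ h ∈ S, h⁻¹ ∈ S) → g ∈ S) →
      -- if `g` is algebraic over `ℂ(z)` …
      ∀ (N : ℕ) (c : ℕ → Polynomial ℂ), c N ≠ 0 →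
      (∃ E : Set ℂ, E.Countable ∧ ∀ z ∉ E,
        ∑ i ∈ Finset.range (N + 1), (c i).eval z * g z ^ i = 0) →
      -- … then `g` is a rational function
      ∃ p q : Polynomial ℂ, q ≠ 0 ∧
        ∃ E : Set ℂ, E.Countable ∧ ∀ z ∉ E, g z = p.eval z / q.eval z) := by
  refine ⟨fun f hf N c hc h => ?_, fun n _ a g hg N c hc h => ?_⟩
  · obtain ⟨p, hp⟩ := (meromorphicOn_univ.1 hf).exists_polynomial_mul_eq_of_algebraic hc h
    exact ⟨p, c N, hc, fun z hz hq => by rw [eq_div_iff hq, mul_comm, hp z hz]⟩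
  · have hgS : g ∈ cocountablyMeromorphic ℂ := hg _
      (fun p q _ => (p.differentiable.meromorphic.fun_div
        q.differentiable.meromorphic).mem_cocountablyMeromorphic)
      (fun f hf _ => hf.meromorphic.mem_cocountablyMeromorphic)
      (fun _ => inv_mem_cocountablyMeromorphic)
    obtain ⟨p, q, hq, hpq⟩ := exists_polynomial_div_eventuallyEq_of_algebraic hgS hc
      (eventually_cocountable_iff.2 h)
    exact ⟨p, q, hq, eventually_cocountable_iff.1 hpq⟩
end

section
/- Let K be a differential field and equip K(y) with the derivation R' = R'_K + y·R_0·R_y, where R_0 ∈ K(y) has nonnegative order at y = 0 (this is the differential field obtained by adjoining a special transcendental element y with y' = y·R_0(y)). Then for every R ∈ K(y), ord(R') ≥ ord(R), where ord is the order of vanishing at y = 0. -/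
/-!
`ordAt0` is a valuation, so by the Leibniz rule the rational functions `R` with
`ordAt0 R ≤ ordAt0 (D R)` are closed under products and quotients. This class contains `X`
because `D X = X R₀` with `ordAt0 R₀ ≥ 0`, and it contains every polynomial `u` with
`u(0) ≠ 0`, because `D` maps polynomials into the ring `{ordAt0 ≥ 0}` (it does so on `K` and on
`X`). Every polynomial is `X ^ m * u` with such a `u`, and every rational function is a quotient
of polynomials.
-/

open scoped Classical

/-- The order of vanishing of a rational function at `y = 0` (with `ord 0 = ⊤`). -/
noncomputable def ordAt0 {K : Type*} [Field K] (R : RatFunc K) : WithTop ℤ :=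
  if R = 0 then ⊤
  else ((Polynomial.rootMultiplicity 0 R.num : ℤ) - Polynomial.rootMultiplicity 0 R.denom : ℤ)

open Polynomial

section Valuation

variable {K : Type*} [Field K]

@[simp]
theorem ordAt0_zero : ordAt0 (0 : RatFunc K) = ⊤ := if_pos rfl

theorem ordAt0_of_ne_zero {R : RatFunc K} (hR : R ≠ 0) :
    ordAt0 R =
      (((rootMultiplicity 0 R.num : ℤ) - rootMultiplicity 0 R.denom : ℤ) : WithTop ℤ) :=
  if_neg hR

theorem ordAt0_div_algebraMap {p q : K[X]} (hp : p ≠ 0) (hq : q ≠ 0) :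
    ordAt0 (algebraMap K[X] (RatFunc K) p / algebraMap K[X] (RatFunc K) q) =
      (((rootMultiplicity 0 p : ℤ) - rootMultiplicity 0 q : ℤ) : WithTop ℤ) := by
  set R := algebraMap K[X] (RatFunc K) p / algebraMap K[X] (RatFunc K) q
  have hR : R ≠ 0 := div_ne_zero (RatFunc.algebraMap_ne_zero hp) (RatFunc.algebraMap_ne_zero hq)
  have hcross : R.num * q = p * R.denom := (RatFunc.num_mul_eq_mul_denom_iff hq).mpr rfl
  have hrm := congrArg (rootMultiplicity 0) hcross
  rw [rootMultiplicity_mul (mul_ne_zero (RatFunc.num_ne_zero hR) hq),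
    rootMultiplicity_mul (mul_ne_zero hp R.denom_ne_zero)] at hrm
  rw [ordAt0_of_ne_zero hR, WithTop.coe_inj]
  omega

theorem ordAt0_algebraMap {p : K[X]} (hp : p ≠ 0) :
    ordAt0 (algebraMap K[X] (RatFunc K) p) = ((rootMultiplicity 0 p : ℤ) : WithTop ℤ) := by
  rw [← div_one (algebraMap K[X] (RatFunc K) p), ← map_one (algebraMap K[X] (RatFunc K)),
    ordAt0_div_algebraMap hp one_ne_zero, rootMultiplicity_eq_zero (p := 1) (by simp),
    Nat.cast_zero, sub_zero]

theorem ordAt0_algebraMap_nonneg (p : K[X]) : 0 ≤ ordAt0 (algebraMap K[X] (RatFunc K) p) := by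
  rcases eq_or_ne p 0 with rfl | hp
  · simp
  · rw [ordAt0_algebraMap hp]
    exact WithTop.coe_nonneg.mpr (Int.natCast_nonneg _)

@[simp]
theorem ordAt0_one : ordAt0 (1 : RatFunc K) = 0 := by
  rw [← map_one (algebraMap K[X] (RatFunc K)), ordAt0_algebraMap one_ne_zero,
    rootMultiplicity_eq_zero (by simp)]
  rfl

theorem ordAt0_mul (a b : RatFunc K) : ordAt0 (a * b) = ordAt0 a + ordAt0 b := by
  rcases eq_or_ne a 0 with rfl | ha
  · simp
  rcases eq_or_ne b 0 with rfl | hb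
  · simp
  have hpa := RatFunc.num_ne_zero ha
  have hpb := RatFunc.num_ne_zero hb
  have hqa := a.denom_ne_zero
  have hqb := b.denom_ne_zero
  rw [← RatFunc.num_div_denom a, ← RatFunc.num_div_denom b, div_mul_div_comm, ← map_mul,
    ← map_mul, ordAt0_div_algebraMap hpa hqa, ordAt0_div_algebraMap hpb hqb,
    ordAt0_div_algebraMap (mul_ne_zero hpa hpb) (mul_ne_zero hqa hqb),
    rootMultiplicity_mul (mul_ne_zero hpa hpb), rootMultiplicity_mul (mul_ne_zero hqa hqb),
    ← WithTop.coe_add, WithTop.coe_inj]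
  push_cast
  ring

theorem ordAt0_neg (a : RatFunc K) : ordAt0 (-a) = ordAt0 a := by
  have hC : (-1 : RatFunc K) = algebraMap K[X] (RatFunc K) (C (-1)) := by simp
  rw [neg_eq_neg_one_mul, ordAt0_mul, hC,
    ordAt0_algebraMap (C_ne_zero.mpr (neg_ne_zero.mpr one_ne_zero)), rootMultiplicity_C]
  simp

theorem min_ordAt0_le_ordAt0_add (a b : RatFunc K) :
    min (ordAt0 a) (ordAt0 b) ≤ ordAt0 (a + b) := by
  rcases eq_or_ne a 0 with rfl | ha
  · simp
  rcases eq_or_ne b 0 with rfl | hb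
  · simp
  rcases eq_or_ne (a + b) 0 with hab | hab
  · simp [hab]
  have hpa := RatFunc.num_ne_zero ha
  have hpb := RatFunc.num_ne_zero hb
  have hqa := a.denom_ne_zero
  have hqb := b.denom_ne_zero
  rw [← RatFunc.num_div_denom a, ← RatFunc.num_div_denom b] at hab ⊢
  rw [div_add_div _ _ (RatFunc.algebraMap_ne_zero hqa) (RatFunc.algebraMap_ne_zero hqb),
    ← map_mul, ← map_mul, ← map_mul, ← map_add] at hab ⊢
  have hnum : a.num * b.denom + a.denom * b.num ≠ 0 := by
    rintro h
    simp [h] at hab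
  have hrm := rootMultiplicity_add 0 hnum
  rw [rootMultiplicity_mul (mul_ne_zero hpa hqb), rootMultiplicity_mul (mul_ne_zero hqa hpb)] at hrm
  rw [ordAt0_div_algebraMap hpa hqa, ordAt0_div_algebraMap hpb hqb,
    ordAt0_div_algebraMap hnum (mul_ne_zero hqa hqb), rootMultiplicity_mul (mul_ne_zero hqa hqb),
    ← WithTop.coe_min, WithTop.coe_le_coe]
  omega

end Valuation

section Derivation

variable {K : Type*} [Field K] {D : RatFunc K → RatFunc K}

theorem deriv_zero_of_leibniz (hmul : ∀ a b, D (a * b) = D a * b + a * D b) : D 0 = 0 := by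
  simpa using hmul 0 0

theorem deriv_one_of_leibniz (hmul : ∀ a b, D (a * b) = D a * b + a * D b) : D 1 = 0 := by
  simpa using hmul 1 1

theorem ordAt0_le_ordAt0_deriv_mul (hmul : ∀ a b, D (a * b) = D a * b + a * D b)
    {a b : RatFunc K} (ha : ordAt0 a ≤ ordAt0 (D a)) (hb : ordAt0 b ≤ ordAt0 (D b)) :
    ordAt0 (a * b) ≤ ordAt0 (D (a * b)) := by
  rw [hmul]
  refine le_trans (le_min ?_ ?_) (min_ordAt0_le_ordAt0_add _ _) <;>
    rw [ordAt0_mul, ordAt0_mul] <;> gcongr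

theorem ordAt0_le_ordAt0_deriv_inv (hmul : ∀ a b, D (a * b) = D a * b + a * D b)
    {b : RatFunc K} (hb : ordAt0 b ≤ ordAt0 (D b)) : ordAt0 b⁻¹ ≤ ordAt0 (D b⁻¹) := by
  rcases eq_or_ne b 0 with rfl | hb0
  · simp [deriv_zero_of_leibniz hmul]
  have hDinv : D b⁻¹ = -(b⁻¹ * b⁻¹ * D b) := by
    have h := hmul b b⁻¹
    rw [mul_inv_cancel₀ hb0, deriv_one_of_leibniz hmul] at h
    linear_combination (-b⁻¹) * h - D b⁻¹ * inv_mul_cancel₀ hb0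
  have hinv : ordAt0 b + ordAt0 b⁻¹ = 0 := by
    rw [← ordAt0_mul, mul_inv_cancel₀ hb0, ordAt0_one]
  rw [hDinv, ordAt0_neg, ordAt0_mul, ordAt0_mul]
  calc ordAt0 b⁻¹ = ordAt0 b⁻¹ + ordAt0 b⁻¹ + ordAt0 b := by
        rw [add_assoc, add_comm (ordAt0 b⁻¹) (ordAt0 b), hinv, add_zero]
    _ ≤ ordAt0 b⁻¹ + ordAt0 b⁻¹ + ordAt0 (D b) := by gcongr

theorem ordAt0_le_ordAt0_deriv_div (hmul : ∀ a b, D (a * b) = D a * b + a * D b)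
    {a b : RatFunc K} (ha : ordAt0 a ≤ ordAt0 (D a)) (hb : ordAt0 b ≤ ordAt0 (D b)) :
    ordAt0 (a / b) ≤ ordAt0 (D (a / b)) := by
  rw [div_eq_mul_inv]
  exact ordAt0_le_ordAt0_deriv_mul hmul ha (ordAt0_le_ordAt0_deriv_inv hmul hb)

theorem ordAt0_le_ordAt0_deriv_X_pow (hmul : ∀ a b, D (a * b) = D a * b + a * D b)
    {R₀ : RatFunc K} (hR₀ : 0 ≤ ordAt0 R₀) (hX : D RatFunc.X = RatFunc.X * R₀) (n : ℕ) :
    ordAt0 ((RatFunc.X : RatFunc K) ^ n) ≤ ordAt0 (D (RatFunc.X ^ n)) := by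
  induction n with
  | zero => simp [deriv_one_of_leibniz hmul]
  | succ n ih =>
    rw [pow_succ]
    refine ordAt0_le_ordAt0_deriv_mul hmul ih ?_
    rw [hX, ordAt0_mul]
    exact le_add_of_nonneg_right hR₀

theorem ordAt0_deriv_algebraMap_nonneg {dK : K → K} {R₀ : RatFunc K} (hR₀ : 0 ≤ ordAt0 R₀)
    (hadd : ∀ a b, D (a + b) = D a + D b) (hmul : ∀ a b, D (a * b) = D a * b + a * D b)
    (hC : ∀ c : K, D (RatFunc.C c) = RatFunc.C (dK c)) (hX : D RatFunc.X = RatFunc.X * R₀)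
    (p : K[X]) : 0 ≤ ordAt0 (D (algebraMap K[X] (RatFunc K) p)) := by
  induction p using Polynomial.induction_on with
  | C c =>
    rw [RatFunc.algebraMap_C, hC, ← RatFunc.algebraMap_C]
    exact ordAt0_algebraMap_nonneg _
  | add p q hp hq =>
    rw [map_add, hadd]
    exact le_trans (le_min hp hq) (min_ordAt0_le_ordAt0_add _ _)
  | monomial n c ih =>
    have hX0 : 0 ≤ ordAt0 (RatFunc.X : RatFunc K) :=
      RatFunc.algebraMap_X (K := K) ▸ ordAt0_algebraMap_nonneg (X : K[X])
    rw [pow_succ, ← mul_assoc, map_mul, hmul, RatFunc.algebraMap_X, hX]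
    refine le_trans (le_min ?_ ?_) (min_ordAt0_le_ordAt0_add _ _)
    · rw [ordAt0_mul]
      exact add_nonneg ih hX0
    · rw [ordAt0_mul, ordAt0_mul]
      exact add_nonneg (ordAt0_algebraMap_nonneg _) (add_nonneg hX0 hR₀)

theorem ordAt0_le_ordAt0_deriv_algebraMap {dK : K → K} {R₀ : RatFunc K}
    (hR₀ : 0 ≤ ordAt0 R₀)
    (hadd : ∀ a b, D (a + b) = D a + D b) (hmul : ∀ a b, D (a * b) = D a * b + a * D b)
    (hC : ∀ c : K, D (RatFunc.C c) = RatFunc.C (dK c)) (hX : D RatFunc.X = RatFunc.X * R₀)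
    (p : K[X]) :
    ordAt0 (algebraMap K[X] (RatFunc K) p) ≤ ordAt0 (D (algebraMap K[X] (RatFunc K) p)) := by
  rcases eq_or_ne p 0 with rfl | hp
  · simp [deriv_zero_of_leibniz hmul]
  obtain ⟨u, hpu, hu⟩ := exists_eq_pow_rootMultiplicity_mul_and_not_dvd p hp 0
  have hu0 : ordAt0 (algebraMap K[X] (RatFunc K) u) = 0 := by
    rw [ordAt0_algebraMap (right_ne_zero_of_mul (hpu ▸ hp)),
      rootMultiplicity_eq_zero (by rwa [dvd_iff_isRoot] at hu)]
    rfl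
  rw [hpu, C_0, sub_zero, map_mul, map_pow, RatFunc.algebraMap_X]
  refine ordAt0_le_ordAt0_deriv_mul hmul (ordAt0_le_ordAt0_deriv_X_pow hmul hR₀ hX _) ?_
  exact hu0 ▸ ordAt0_deriv_algebraMap_nonneg hR₀ hadd hmul hC hX u

end Derivation

theorem special_derivation_order_nondecreasing_general
    {K : Type*} [Field K] (dK : K → K)
    (R₀ : RatFunc K) (hR₀ : 0 ≤ ordAt0 R₀)
    (D : RatFunc K → RatFunc K)
    (hadd : ∀ a b, D (a + b) = D a + D b)
    (hmul : ∀ a b, D (a * b) = D a * b + a * D b)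
    (hC : ∀ c : K, D (RatFunc.C c) = RatFunc.C (dK c))
    (hX : D RatFunc.X = RatFunc.X * R₀) :
    ∀ R : RatFunc K, ordAt0 R ≤ ordAt0 (D R) := by
  intro R
  rw [← RatFunc.num_div_denom R]
  exact ordAt0_le_ordAt0_deriv_div hmul
    (ordAt0_le_ordAt0_deriv_algebraMap hR₀ hadd hmul hC hX R.num)
    (ordAt0_le_ordAt0_deriv_algebraMap hR₀ hadd hmul hC hX R.denom)

/-- In the differential field `K⟨y⟩ ≅ K(y)` obtained by adjoining a special transcendental
element `y` with `y' = y·R₀(y)` where `ord R₀ ≥ 0` (derivation `R' = R'_K + y R₀ R_y`),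
the derivative does not decrease the order at `y = 0`: `ord(R') ≥ ord R`. -/
theorem special_derivation_order_nondecreasing
    {K : Type*} [Field K] [CharZero K] (dK : K → K)
    (hKadd : ∀ a b, dK (a + b) = dK a + dK b)
    (hKmul : ∀ a b, dK (a * b) = dK a * b + a * dK b)
    (R₀ : RatFunc K) (hR₀ : 0 ≤ ordAt0 R₀)
    (D : RatFunc K → RatFunc K)
    (hadd : ∀ a b, D (a + b) = D a + D b)
    (hmul : ∀ a b, D (a * b) = D a * b + a * D b)
    (hC : ∀ c : K, D (RatFunc.C c) = RatFunc.C (dK c))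
    (hX : D RatFunc.X = RatFunc.X * R₀) :
    ∀ R : RatFunc K, ordAt0 R ≤ ordAt0 (D R) :=
  special_derivation_order_nondecreasing_general dK R₀ hR₀ D hadd hmul hC hX
end

section
/- Let K ⊆ E be an admissible extension of differential fields (a tower K = K_0 ⊆ … ⊆ K_n = E where each step adjoins a special transcendental element). If a Rosenlicht type equation T(u, u', …, u^{(n-1)}) = 0 over K has a solution in E, then it has a solution in K. -/
/-!
Write `L ⊆ L(y)` for one step of the tower, with `y` transcendental over `L` and
`y' = y · n(y) / m(y)`, `m(0) ≠ 0`. Elements of `L(y)` regular at `y = 0` form a subring on which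
evaluation at `y = 0` is a ring homomorphism onto `L` commuting with the derivation, because `y'`
vanishes at `y = 0`. So a solution `u` regular at `0` specializes to the solution `u(0) ∈ L`.
If instead `u` has a pole of order `n > 0`, then every `y ^ n u⁽ʲ⁾` is still regular (as `y'/y` is),
and evaluating `y ^ (n N) T(u, u', …)` at `0` leaves only the top homogeneous part `u^N` of `T`,
giving `(y ^ n u)(0) ^ N = 0`, which is absurd. Descending the tower one step at a time proves the
theorem.
-/

open Polynomial IntermediateField

section

variable {E : Type*} [Field E]

def Derivation.ofAddLeibniz (d : E → E) (hdadd : ∀ a b, d (a + b) = d a + d b)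
    (hdmul : ∀ a b, d (a * b) = d a * b + a * d b) : Derivation ℤ E E :=
  Derivation.mk' (AddMonoidHom.mk' d hdadd).toIntLinearMap fun a b => by
    simp only [AddMonoidHom.coe_toIntLinearMap, AddMonoidHom.mk'_apply, smul_eq_mul, hdmul]
    ring

theorem Derivation.mem_adjoin_of_mem_adjoin (D : Derivation ℤ E E) {F : Subfield E} {S : Set E}
    (hF : ∀ x ∈ F, D x ∈ F) (hS : ∀ x ∈ S, D x ∈ adjoin F S) {x : E} (hx : x ∈ adjoin F S) :
    D x ∈ adjoin F S := by
  induction hx using IntermediateField.adjoin_induction with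
  | mem x hx => exact hS x hx
  | algebraMap x => exact (adjoin F S).algebraMap_mem ⟨D x, hF x x.2⟩
  | add x y _ _ hx hy => rw [map_add]; exact add_mem hx hy
  | inv x hx' hx =>
    rw [D.leibniz_inv, smul_eq_mul, neg_mul]
    exact neg_mem (mul_mem (pow_mem (inv_mem hx') 2) hx)
  | mul x y hx' hy' hx hy =>
    rw [D.leibniz, smul_eq_mul, smul_eq_mul]
    exact add_mem (mul_mem hx' hy) (mul_mem hy' hx)

/-- `x`, as a rational function `a(y) / b(y)` of `y` over `L`, is regular at `y = 0` with value
`c = a(0) / b(0)`. -/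
def HasValueAtZero (L : Subfield E) (y x c : E) : Prop :=
  ∃ a b : L[X], aeval y b ≠ 0 ∧ aeval (0 : E) b ≠ 0 ∧
    x = aeval y a / aeval y b ∧ c = aeval (0 : E) a / aeval (0 : E) b

section ValueAtZero

variable {L : Subfield E} {y x x' c c' : E}

theorem hasValueAtZero_aeval (p : L[X]) : HasValueAtZero L y (aeval y p) (aeval (0 : E) p) :=
  ⟨p, 1, by simp, by simp, by simp, by simp⟩

theorem hasValueAtZero_of_mem (hx : x ∈ L) : HasValueAtZero L y x x := by
  have h := hasValueAtZero_aeval (L := L) (y := y) (C ⟨x, hx⟩)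
  rwa [aeval_C, aeval_C] at h

theorem hasValueAtZero_self : HasValueAtZero L y y 0 := by
  simpa using hasValueAtZero_aeval (L := L) (y := y) X

namespace HasValueAtZero

theorem mem (h : HasValueAtZero L y x c) : c ∈ L := by
  obtain ⟨a, b, -, -, -, rfl⟩ := h
  rw [← coeff_zero_eq_aeval_zero', ← coeff_zero_eq_aeval_zero']
  exact div_mem (SetLike.coe_mem _) (SetLike.coe_mem _)

theorem add (h : HasValueAtZero L y x c) (h' : HasValueAtZero L y x' c') :
    HasValueAtZero L y (x + x') (c + c') := by
  obtain ⟨a, b, hb, hb0, rfl, rfl⟩ := h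
  obtain ⟨a', b', hb', hb0', rfl, rfl⟩ := h'
  refine ⟨a * b' + a' * b, b * b', ?_, ?_, ?_, ?_⟩ <;> simp only [map_add, map_mul] <;>
    first | exact mul_ne_zero ‹_› ‹_› | field_simp

theorem mul (h : HasValueAtZero L y x c) (h' : HasValueAtZero L y x' c') :
    HasValueAtZero L y (x * x') (c * c') := by
  obtain ⟨a, b, hb, hb0, rfl, rfl⟩ := h
  obtain ⟨a', b', hb', hb0', rfl, rfl⟩ := h'
  refine ⟨a * a', b * b', ?_, ?_, ?_, ?_⟩ <;> simp only [map_mul] <;>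
    first | exact mul_ne_zero ‹_› ‹_› | field_simp

theorem neg (h : HasValueAtZero L y x c) : HasValueAtZero L y (-x) (-c) := by
  obtain ⟨a, b, hb, hb0, rfl, rfl⟩ := h
  exact ⟨-a, b, hb, hb0, by simp [neg_div], by simp [neg_div]⟩

theorem sub (h : HasValueAtZero L y x c) (h' : HasValueAtZero L y x' c') :
    HasValueAtZero L y (x - x') (c - c') := by
  simpa only [sub_eq_add_neg] using h.add h'.neg

theorem inv (h : HasValueAtZero L y x c) (hx : x ≠ 0) (hc : c ≠ 0) :
    HasValueAtZero L y x⁻¹ c⁻¹ := by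
  obtain ⟨a, b, hb, hb0, rfl, rfl⟩ := h
  exact ⟨b, a, (div_ne_zero_iff.mp hx).1, (div_ne_zero_iff.mp hc).1,
    inv_div _ _, inv_div _ _⟩

theorem pow (h : HasValueAtZero L y x c) (n : ℕ) : HasValueAtZero L y (x ^ n) (c ^ n) := by
  induction n with
  | zero => simpa using hasValueAtZero_of_mem (one_mem L)
  | succ n ih => simpa only [pow_succ] using ih.mul h

theorem self_mul (h : HasValueAtZero L y x c) : HasValueAtZero L y (y * x) 0 := by
  simpa using hasValueAtZero_self.mul h

theorem unique (hy : Transcendental L y) (h : HasValueAtZero L y x c)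
    (h' : HasValueAtZero L y x c') : c = c' := by
  obtain ⟨a, b, hb, hb0, hx, rfl⟩ := h
  obtain ⟨a', b', hb', hb0', hx', rfl⟩ := h'
  have hpoly : a * b' = a' * b := transcendental_iff_injective.mp hy <| by
    rw [hx] at hx'
    rw [div_eq_div_iff hb hb'] at hx'
    simpa only [map_mul] using hx'
  rw [div_eq_div_iff hb0 hb0', ← map_mul, ← map_mul, hpoly]

end HasValueAtZero

theorem hasValueAtZero_sum {ι : Type*} (s : Finset ι) {x c : ι → E}
    (h : ∀ i ∈ s, HasValueAtZero L y (x i) (c i)) :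
    HasValueAtZero L y (∑ i ∈ s, x i) (∑ i ∈ s, c i) := by
  classical
  induction s using Finset.induction_on with
  | empty => simpa using hasValueAtZero_of_mem (zero_mem L)
  | insert i s hi ih =>
    rw [Finset.sum_insert hi, Finset.sum_insert hi]
    exact (h i (s.mem_insert_self i)).add (ih fun j hj => h j (Finset.mem_insert_of_mem hj))

theorem hasValueAtZero_prod {ι : Type*} (s : Finset ι) {x c : ι → E}
    (h : ∀ i ∈ s, HasValueAtZero L y (x i) (c i)) :
    HasValueAtZero L y (∏ i ∈ s, x i) (∏ i ∈ s, c i) := by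
  classical
  induction s using Finset.induction_on with
  | empty => simpa using hasValueAtZero_of_mem (one_mem L)
  | insert i s hi ih =>
    rw [Finset.prod_insert hi, Finset.prod_insert hi]
    exact (h i (s.mem_insert_self i)).mul (ih fun j hj => h j (Finset.mem_insert_of_mem hj))

end ValueAtZero

section Derivation

variable (D : Derivation ℤ E E) {L : Subfield E} {y x c : E}

theorem hasValueAtZero_deriv_aeval (hL : ∀ x ∈ L, D x ∈ L) (hdy : HasValueAtZero L y (D y) 0)
    (p : L[X]) : HasValueAtZero L y (D (aeval y p)) (D (aeval (0 : E) p)) := by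
  induction p using Polynomial.induction_on with
  | C a =>
    rw [aeval_C, aeval_C]
    exact hasValueAtZero_of_mem (hL a a.2)
  | add p q hp hq => simpa only [map_add] using hp.add hq
  | monomial n a ih =>
    rw [pow_succ, ← mul_assoc, map_mul (aeval y), map_mul (aeval (0 : E)), aeval_X, aeval_X,
      D.leibniz, D.leibniz]
    convert ((hasValueAtZero_aeval (C a * X ^ n)).mul hdy).add (hasValueAtZero_self.mul ih)
      using 1 <;> simp

theorem HasValueAtZero.deriv (h : HasValueAtZero L y x c) (hL : ∀ x ∈ L, D x ∈ L)
    (hdy : HasValueAtZero L y (D y) 0) : HasValueAtZero L y (D x) (D c) := by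
  obtain ⟨a, b, hb, hb0, rfl, rfl⟩ := h
  simp only [D.leibniz_div, smul_eq_mul]
  exact (((hasValueAtZero_aeval b).inv hb hb0).pow 2).mul
    (((hasValueAtZero_aeval b).mul (hasValueAtZero_deriv_aeval D hL hdy a)).sub
      ((hasValueAtZero_aeval a).mul (hasValueAtZero_deriv_aeval D hL hdy b)))

theorem HasValueAtZero.iterate_deriv (h : HasValueAtZero L y x c) (hL : ∀ x ∈ L, D x ∈ L)
    (hdy : HasValueAtZero L y (D y) 0) (n : ℕ) :
    HasValueAtZero L y (D^[n] x) (D^[n] c) := by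
  induction n with
  | zero => exact h
  | succ n ih => simpa only [Function.iterate_succ_apply'] using ih.deriv D hL hdy

theorem exists_hasValueAtZero_pow_mul_deriv (hL : ∀ x ∈ L, D x ∈ L) {z ζ : E} (hz : D y = y * z)
    (hζ : HasValueAtZero L y z ζ) {n : ℕ} (h : HasValueAtZero L y (y ^ n * x) c) :
    ∃ c', HasValueAtZero L y (y ^ n * D x) c' := by
  have hdy : HasValueAtZero L y (D y) 0 := hz ▸ hζ.self_mul
  have hdpow : D (y ^ n) = n * z * y ^ n := by
    rcases n with _ | n
    · simp
    · rw [D.leibniz_pow, hz, nsmul_eq_mul, smul_eq_mul]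
      push_cast
      ring
  have hmul_deriv : y ^ n * D x = D (y ^ n * x) - n * z * (y ^ n * x) := by
    rw [D.leibniz, hdpow, smul_eq_mul, smul_eq_mul]
    ring
  rw [hmul_deriv]
  exact ⟨_, (h.deriv D hL hdy).sub
    (((hasValueAtZero_of_mem (natCast_mem L n)).mul hζ).mul h)⟩

end Derivation

section MvPolynomial

open MvPolynomial

variable {ι : Type*} {L K : Subfield E} {y : E} {v c : ι → E}

theorem HasValueAtZero.mvPolynomial_aeval (hKL : K ≤ L)
    (h : ∀ i, HasValueAtZero L y (v i) (c i)) (P : MvPolynomial ι K) :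
    HasValueAtZero L y (aeval v P) (aeval c P) := by
  induction P using MvPolynomial.induction_on with
  | C k =>
    rw [MvPolynomial.aeval_C, MvPolynomial.aeval_C]
    exact hasValueAtZero_of_mem (hKL k.2)
  | add P Q hP hQ => simpa only [map_add] using hP.add hQ
  | mul_X P i hP => simpa only [map_mul, MvPolynomial.aeval_X] using hP.mul (h i)

/-- Each monomial `v ^ m` of `P` is rewritten as `t ^ (N - |m|) (t v) ^ m`, whose value vanishes
unless `|m| = N`. -/
theorem HasValueAtZero.pow_mul_mvPolynomial_aeval (hKL : K ≤ L) {t : E}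
    (ht : HasValueAtZero L y t 0) (h : ∀ i, HasValueAtZero L y (t * v i) (c i))
    (P : MvPolynomial ι K) {N : ℕ} (hP : P.totalDegree ≤ N) :
    HasValueAtZero L y (t ^ N * aeval v P) (aeval c (homogeneousComponent N P)) := by
  classical
  have hval : aeval c (homogeneousComponent N P) = ∑ m ∈ P.support,
      algebraMap K E (coeff m P) * 0 ^ (N - m.degree) * ∏ i ∈ m.support, c i ^ m i := by
    rw [homogeneousComponent_apply, map_sum, Finset.sum_filter]
    refine Finset.sum_congr rfl fun m hm => ?_
    have hmN : m.degree ≤ N := (le_totalDegree hm).trans hP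
    rcases hmN.eq_or_lt with hdeg | hdeg
    · simp [hdeg, MvPolynomial.aeval_monomial, Finsupp.prod]
    · simp [hdeg.ne, Nat.sub_ne_zero_of_lt hdeg]
  rw [hval, MvPolynomial.aeval_def, eval₂_eq, Finset.mul_sum]
  refine hasValueAtZero_sum _ fun m hm => ?_
  have hmN : m.degree ≤ N := (le_totalDegree hm).trans hP
  have hsplit : t ^ N * (algebraMap K E (coeff m P) * ∏ i ∈ m.support, v i ^ m i) =
      algebraMap K E (coeff m P) * t ^ (N - m.degree) * ∏ i ∈ m.support, (t * v i) ^ m i := by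
    rw [Finset.prod_congr rfl fun i _ => mul_pow t (v i) (m i), Finset.prod_mul_distrib,
      Finset.prod_pow_eq_pow_sum, ← Finsupp.degree_apply]
    rw [← Nat.sub_add_cancel hmN, pow_add, Nat.add_sub_cancel]
    ring
  rw [hsplit]
  exact ((hasValueAtZero_of_mem (hKL (coeff m P).2)).mul (ht.pow _)).mul
    (hasValueAtZero_prod _ fun i _ => (h i).pow _)

end MvPolynomial

section Descent

variable {L K : Subfield E} {y : E}

theorem Polynomial.exists_eq_X_pow_mul_coeff_zero_ne_zero {R : Type*} [Ring R] {p : R[X]}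
    (hp : p ≠ 0) : ∃ (k : ℕ) (q : R[X]), p = X ^ k * q ∧ q.coeff 0 ≠ 0 := by
  obtain ⟨q, hpq, hq⟩ := exists_eq_pow_rootMultiplicity_mul_and_not_dvd p hp 0
  exact ⟨_, q, by simpa using hpq, by simpa [X_dvd_iff] using hq⟩

theorem Polynomial.aeval_zero_ne_zero_of_coeff_zero_ne_zero {F A : Type*} [Field F] [Semiring A]
    [Nontrivial A] [Algebra F A] {p : F[X]} (hp : p.coeff 0 ≠ 0) : aeval (0 : A) p ≠ 0 := by
  rwa [← coeff_zero_eq_aeval_zero', _root_.map_ne_zero]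

theorem exists_hasValueAtZero_or_pole (hy : Transcendental L y) {u : E} (hu : u ∈ L⟮y⟯) :
    (∃ c, HasValueAtZero L y u c) ∨
      ∃ n c, 0 < n ∧ c ≠ 0 ∧ HasValueAtZero L y (y ^ n * u) c := by
  obtain ⟨a, b, rfl⟩ := (mem_adjoin_simple_iff _ _).1 hu
  by_cases hab : a = 0 ∨ b = 0
  · refine Or.inl ⟨0, ?_⟩
    rcases hab with rfl | rfl <;> simpa using hasValueAtZero_of_mem (zero_mem L)
  rw [not_or] at hab
  obtain ⟨α, a₁, rfl, ha₁⟩ := exists_eq_X_pow_mul_coeff_zero_ne_zero hab.1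
  obtain ⟨β, b₁, rfl, hb₁⟩ := exists_eq_X_pow_mul_coeff_zero_ne_zero hab.2
  have hne : ∀ p : L[X], p ≠ 0 → aeval y p ≠ 0 := fun p hp h => hy ⟨p, hp, h⟩
  have hy0 : y ≠ 0 := by simpa using hne X X_ne_zero
  have hb₁y : aeval y b₁ ≠ 0 := hne b₁ fun h => hb₁ (by simp [h])
  have hw : HasValueAtZero L y (aeval y a₁ / aeval y b₁) (aeval (0 : E) a₁ / aeval (0 : E) b₁) :=
    ⟨a₁, b₁, hb₁y, aeval_zero_ne_zero_of_coeff_zero_ne_zero hb₁, rfl, rfl⟩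
  simp only [map_mul, map_pow, aeval_X]
  rcases le_or_gt β α with hβα | hαβ
  · refine Or.inl ⟨0 ^ (α - β) * (aeval (0 : E) a₁ / aeval (0 : E) b₁), ?_⟩
    convert (hasValueAtZero_self.pow (α - β)).mul hw using 1
    rw [← pow_sub_mul_pow y hβα]
    field_simp
  · refine Or.inr ⟨β - α, _, by omega, div_ne_zero (aeval_zero_ne_zero_of_coeff_zero_ne_zero ha₁)
      (aeval_zero_ne_zero_of_coeff_zero_ne_zero hb₁), ?_⟩
    convert hw using 1
    rw [← pow_sub_mul_pow y hαβ.le]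
    field_simp

theorem exists_eq_mul_hasValueAtZero_of_X_dvd_num (hy : Transcendental L y) {𝓡 : RatFunc L}
    (h𝓡 : X ∣ 𝓡.num) :
    ∃ z ζ, aeval y 𝓡.num / aeval y 𝓡.denom = y * z ∧ HasValueAtZero L y z ζ := by
  obtain ⟨n₁, hn₁⟩ := h𝓡
  have hdenom : 𝓡.denom.coeff 0 ≠ 0 := fun h =>
    not_isUnit_X ((RatFunc.isCoprime_num_denom 𝓡).isUnit_of_dvd' ⟨n₁, hn₁⟩ (X_dvd_iff.2 h))
  refine ⟨_, _, by rw [hn₁, map_mul, aeval_X, mul_div_assoc], n₁, 𝓡.denom,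
    fun h => hy ⟨_, 𝓡.denom_ne_zero, h⟩, aeval_zero_ne_zero_of_coeff_zero_ne_zero hdenom, rfl, rfl⟩

variable (D : Derivation ℤ E E)

open MvPolynomial in
theorem HasValueAtZero.aeval_iterate_deriv_eq_zero {u c : E} (hu : HasValueAtZero L y u c)
    (hy : Transcendental L y) (hL : ∀ x ∈ L, D x ∈ L) (hdy : HasValueAtZero L y (D y) 0)
    (hKL : K ≤ L) {T : MvPolynomial ℕ K} (hsol : aeval (fun i => D^[i] u) T = 0) :
    aeval (fun i => D^[i] c) T = 0 := by
  have h := HasValueAtZero.mvPolynomial_aeval hKL (hu.iterate_deriv D hL hdy) T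
  rw [hsol] at h
  exact ((hasValueAtZero_of_mem (zero_mem L)).unique hy h).symm

open MvPolynomial in
theorem aeval_iterate_deriv_ne_zero_of_pole (hy : Transcendental L y) (hL : ∀ x ∈ L, D x ∈ L)
    {z ζ : E} (hz : D y = y * z) (hζ : HasValueAtZero L y z ζ) (hKL : K ≤ L) {N : ℕ}
    {T : MvPolynomial ℕ K} (hdeg : T.totalDegree ≤ N)
    (hhom : homogeneousComponent N T = X 0 ^ N) {u c : E} {n : ℕ} (hn : 0 < n) (hc : c ≠ 0)
    (hu : HasValueAtZero L y (y ^ n * u) c) : aeval (fun i => D^[i] u) T ≠ 0 := by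
  have hiter : ∀ i, ∃ c', HasValueAtZero L y (y ^ n * D^[i] u) c' := by
    intro i
    induction i with
    | zero => exact ⟨c, hu⟩
    | succ i ih =>
      obtain ⟨c', h'⟩ := ih
      simpa only [Function.iterate_succ_apply'] using
        exists_hasValueAtZero_pow_mul_deriv D hL hz hζ h'
  choose cs hcs using hiter
  have hyn : HasValueAtZero L y (y ^ n) 0 := by
    simpa [hn.ne'] using hasValueAtZero_self.pow (L := L) (y := y) n
  have htop := HasValueAtZero.pow_mul_mvPolynomial_aeval hKL hyn hcs T hdeg
  rw [hhom, map_pow, MvPolynomial.aeval_X, (hcs 0).unique hy hu] at htop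
  intro hsol
  rw [hsol, mul_zero] at htop
  exact pow_ne_zero N hc ((hasValueAtZero_of_mem (zero_mem L)).unique hy htop).symm

open MvPolynomial in
theorem exists_mem_aeval_iterate_deriv_eq_zero_of_mem_adjoin (hKL : K ≤ L)
    (hL : ∀ x ∈ L, D x ∈ L) (hy : Transcendental L y) {𝓡 : RatFunc L}
    (h𝓡 : Polynomial.X ∣ 𝓡.num)
    (hdy : D y = Polynomial.aeval y 𝓡.num / Polynomial.aeval y 𝓡.denom)
    {N : ℕ} {T : MvPolynomial ℕ K} (hdeg : T.totalDegree ≤ N)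
    (hhom : homogeneousComponent N T = X 0 ^ N) {u : E} (hu : u ∈ L⟮y⟯)
    (hsol : aeval (fun i => D^[i] u) T = 0) : ∃ v ∈ L, aeval (fun i => D^[i] v) T = 0 := by
  obtain ⟨z, ζ, hz, hζ⟩ := exists_eq_mul_hasValueAtZero_of_X_dvd_num hy h𝓡
  rw [← hdy] at hz
  rcases exists_hasValueAtZero_or_pole hy hu with ⟨c, hc⟩ | ⟨n, c, hn, hc0, hc⟩
  · exact ⟨c, hc.mem, hc.aeval_iterate_deriv_eq_zero D hy hL (hz ▸ hζ.self_mul) hKL hsol⟩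
  · exact absurd hsol (aeval_iterate_deriv_ne_zero_of_pole D hy hL hz hζ hKL hdeg hhom hn hc0 hc)

end Descent

end

theorem rosenlicht_descends_admissible_extension_general
    {E : Type*} [Field E] (d : E → E)
    (hdadd : ∀ a b, d (a + b) = d a + d b)
    (hdmul : ∀ a b, d (a * b) = d a * b + a * d b)
    (m : ℕ) (s : ℕ → Subfield E)
    (htop : s m = ⊤)
    (hclosed : ∀ i ≤ m, ∀ x ∈ s i, d x ∈ s i)
    (hmono : ∀ i < m, s i ≤ s (i + 1))
    -- each step adjoins a special transcendental element
    (hstep : ∀ i < m, ∃ y : E, y ∈ s (i + 1) ∧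
      Transcendental (s i) y ∧
      (∃ 𝓡 : RatFunc (s i), Polynomial.X ∣ 𝓡.num ∧
        d y = Polynomial.aeval y 𝓡.num / Polynomial.aeval y 𝓡.denom) ∧
      (∀ M : Subfield E, (∀ x ∈ M, d x ∈ M) → s i ≤ M → y ∈ M → s (i + 1) ≤ M))
    -- a Rosenlicht type polynomial of degree `N` over `K = s 0`
    (N : ℕ) (T : MvPolynomial ℕ (s 0))
    (hdeg : T.totalDegree ≤ N)
    (hhom : MvPolynomial.homogeneousComponent N T = MvPolynomial.X 0 ^ N)
    -- a solution in `E`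
    (hsol : ∃ u : E, MvPolynomial.aeval (fun i => d^[i] u) T = 0) :
    -- yields a solution in `K`
    ∃ u : E, u ∈ s 0 ∧ MvPolynomial.aeval (fun i => d^[i] u) T = 0 := by
  let D := Derivation.ofAddLeibniz d hdadd hdmul
  have hK : ∀ i ≤ m, s 0 ≤ s i := by
    intro i hi
    induction i with
    | zero => exact le_rfl
    | succ i ih => exact (ih (by omega)).trans (hmono i (by omega))
  suffices ∀ i ≤ m, ∃ u ∈ s i, MvPolynomial.aeval (fun j => D^[j] u) T = 0 from this 0 m.zero_le
  intro i hi
  induction hi using Nat.decreasingInduction with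
  | self => exact hsol.imp fun u hu => ⟨htop ▸ Subfield.mem_top u, hu⟩
  | of_succ i hi ih =>
    obtain ⟨u, hu, hsolu⟩ := ih
    obtain ⟨y, -, hy, ⟨𝓡, h𝓡, hdy⟩, hmin⟩ := hstep i hi
    have hyD : ∀ x ∈ ({y} : Set E), D x ∈ (s i)⟮y⟯ := by
      rintro _ rfl
      exact (mem_adjoin_simple_iff _ _).2 ⟨_, _, hdy⟩
    have hadjoin : s (i + 1) ≤ ((s i)⟮y⟯).toSubfield :=
      hmin _ (fun x hx => D.mem_adjoin_of_mem_adjoin (hclosed i hi.le) hyD hx)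
        (fun x hx => ((s i)⟮y⟯).algebraMap_mem ⟨x, hx⟩) (mem_adjoin_simple_self _ y)
    exact exists_mem_aeval_iterate_deriv_eq_zero_of_mem_adjoin D (hK i hi.le) (hclosed i hi.le) hy
      h𝓡 hdy hdeg hhom (hadjoin hu) hsolu

/-- Let `K = s 0 ⊆ s 1 ⊆ … ⊆ s m = E` be an admissible extension of differential fields:
each step adjoins (i.e. is differentially generated by) a special transcendental element.
If a Rosenlicht type equation `T(u, u', …) = 0` over `K` (the degree-`N` homogeneous part of
`T` equals `u^N`, variable `i` of the differential polynomial `T` standing for `u⁽ⁱ⁾`) has a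
solution in `E`, then it has a solution in `K`. -/
theorem rosenlicht_descends_admissible_extension
    {E : Type*} [Field E] [CharZero E] (d : E → E)
    (hdadd : ∀ a b, d (a + b) = d a + d b)
    (hdmul : ∀ a b, d (a * b) = d a * b + a * d b)
    (m : ℕ) (s : ℕ → Subfield E)
    (htop : s m = ⊤)
    (hclosed : ∀ i ≤ m, ∀ x ∈ s i, d x ∈ s i)
    (hmono : ∀ i < m, s i ≤ s (i + 1))
    -- each step adjoins a special transcendental element
    (hstep : ∀ i < m, ∃ y : E, y ∈ s (i + 1) ∧
      Transcendental (s i) y ∧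
      (∃ 𝓡 : RatFunc (s i), Polynomial.X ∣ 𝓡.num ∧
        d y = Polynomial.aeval y 𝓡.num / Polynomial.aeval y 𝓡.denom) ∧
      (∀ M : Subfield E, (∀ x ∈ M, d x ∈ M) → s i ≤ M → y ∈ M → s (i + 1) ≤ M))
    -- a Rosenlicht type polynomial of degree `N` over `K = s 0`
    (N : ℕ) (T : MvPolynomial ℕ (s 0))
    (hdeg : T.totalDegree ≤ N)
    (hhom : MvPolynomial.homogeneousComponent N T = MvPolynomial.X 0 ^ N)
    -- a solution in `E`
    (hsol : ∃ u : E, MvPolynomial.aeval (fun i => d^[i] u) T = 0) :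
    -- yields a solution in `K`
    ∃ u : E, u ∈ s 0 ∧ MvPolynomial.aeval (fun i => d^[i] u) T = 0 :=
  rosenlicht_descends_admissible_extension_general d hdadd hdmul m s htop hclosed hmono hstep N T
    hdeg hhom hsol
end

section
/- Let F ⊇ K be differential fields, y ∈ F nonzero with y' = a y for some a ∈ K, and u = c·y^m with c ∈ K and m ∈ ℤ. Then u' = (c' + m a c)·y^m. Moreover u' = 0 if and only if c = λ y^{-m} for some constant λ; and if u' = 0 with c ≠ 0, then y^m ∈ K. -/
/-- Let `y ∈ F` be nonzero with `y' = a y`, `a ∈ K`, and `u = c·yᵐ` with `c ∈ K`, `m ∈ ℤ`.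
Then `u' = (c' + m a c)·yᵐ`; `u' = 0` iff `c = λ·y⁻ᵐ` for a constant `λ`; and if `u' = 0`
with `c ≠ 0`, then `yᵐ ∈ K`. -/
theorem exp_integral_monomial
    {K F : Type*} [Field K] [Field F] [CharZero K] [Algebra K F]
    (dK : K → K) (dF : F → F)
    (hKadd : ∀ a b, dK (a + b) = dK a + dK b)
    (hKmul : ∀ a b, dK (a * b) = dK a * b + a * dK b)
    (hFadd : ∀ a b, dF (a + b) = dF a + dF b)
    (hFmul : ∀ a b, dF (a * b) = dF a * b + a * dF b)
    (hcompat : ∀ c : K, dF (algebraMap K F c) = algebraMap K F (dK c))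
    (hconst : ∀ x : F, dF x = 0 → x ∈ (algebraMap K F).range)
    (y : F) (hy : y ≠ 0) (a : K) (hya : dF y = algebraMap K F a * y)
    (c : K) (m : ℤ) (u : F) (hu : u = algebraMap K F c * y ^ m) :
    dF u = algebraMap K F (dK c + (m : K) * a * c) * y ^ m ∧
    (dF u = 0 ↔ ∃ lam : F, dF lam = 0 ∧ algebraMap K F c = lam * y ^ (-m)) ∧
    (dF u = 0 → c ≠ 0 → y ^ m ∈ (algebraMap K F).range) := by
  have hone : dF 1 = 0 := by
    have h := hFmul 1 1
    simpa using h
  have hinv : ∀ x : F, x ≠ 0 → dF x⁻¹ = - dF x * (x⁻¹ * x⁻¹) := by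
    intro x hx
    have h : dF (x * x⁻¹) = 0 := by rw [mul_inv_cancel₀ hx]; exact hone
    rw [hFmul x x⁻¹] at h
    have h2 : x * dF x⁻¹ = - (dF x * x⁻¹) := by linear_combination h
    have h3 : dF x⁻¹ = x⁻¹ * (x * dF x⁻¹) := by
      rw [← mul_assoc, inv_mul_cancel₀ hx, one_mul]
    rw [h3, h2]
    ring
  have hpowN : ∀ n : ℕ, dF (y ^ n) = (n : F) * algebraMap K F a * y ^ n := by
    intro n
    induction n with
    | zero => simpa using hone
    | succ n ih =>
      rw [pow_succ, hFmul, ih, hya]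
      push_cast
      ring
  have hpowZ : ∀ k : ℤ, dF (y ^ k) = (k : F) * algebraMap K F a * y ^ k := by
    intro k
    cases k with
    | ofNat n => simpa [zpow_natCast] using hpowN n
    | negSucc n =>
      have hyn : y ^ (n + 1) ≠ 0 := pow_ne_zero _ hy
      rw [zpow_negSucc, hinv _ hyn, hpowN]
      push_cast
      field_simp
  have hym : y ^ m ≠ 0 := zpow_ne_zero m hy
  have hdu : dF u = algebraMap K F (dK c + (m : K) * a * c) * y ^ m := by
    rw [hu, hFmul, hcompat, hpowZ]
    simp only [map_add, map_mul, map_intCast]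
    ring
  refine ⟨hdu, ⟨?_, ?_⟩, ?_⟩
  · intro h0
    refine ⟨u, h0, ?_⟩
    rw [hu, zpow_neg, mul_assoc, mul_inv_cancel₀ hym, mul_one]
  · rintro ⟨lam, hlam, hc⟩
    have : u = lam := by
      rw [hu, hc, mul_assoc, ← zpow_add₀ hy]
      simp
    rw [this]; exact hlam
  · intro h0 hc0
    obtain ⟨k, hk⟩ := hconst u h0
    refine ⟨k / c, ?_⟩
    rw [map_div₀, hk, hu]
    have hcF : algebraMap K F c ≠ 0 := by
      simpa using hc0
    field_simp
end
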